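/- Let (K, ∂) be a differential field of characteristic zero, let j, ψ ∈ K with ∂ψ ≠ 0 and ∂j ≠ 0, and suppose the chain rule identities hold in the sense that j∘ψ is defined with S(j∘ψ) = (S(j)∘ψ)·(ψ')² + S(ψ) and (j∘ψ)' = (j'∘ψ)·ψ'. If χ(j) = 0 and χ(j∘ψ) = 0, where χ(y) = S(y) + R(y)(y')² with R(y) = (y² - 1968y + 2654208)/(2y²(y-1728)²), then S(ψ) = 0. (Concrete version: for holomorphic functions j on ℍ and ψ: U → ℍ with nonvanishing derivatives, if χ(j) ≡ 0 and χ(j∘ψ) ≡ 0 then S(ψ) ≡ 0.) -/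

import Mathlib

open Complex

/-- The Schwarzian derivative of a function `f : ℂ → ℂ`:
`S(f) = (f''/f')' - (1/2)(f''/f')²`. -/
noncomputable def schwarzian (f : ℂ → ℂ) (z : ℂ) : ℂ :=
  deriv (fun w => deriv (deriv f) w / deriv f w) z - (deriv (deriv f) z / deriv f z) ^ 2 / 2

/-- `R(y) = (y² - 1968 y + 2654208)/(2 y² (y - 1728)²)`. -/
noncomputable def Rj (y : ℂ) : ℂ :=
  (y ^ 2 - 1968 * y + 2654208) / (2 * y ^ 2 * (y - 1728) ^ 2)

/-- The operator `χ(f) = S(f) + R(f)·(f')²` applied to a holomorphic function. -/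
noncomputable def chi (f : ℂ → ℂ) (z : ℂ) : ℂ :=
  schwarzian f z + Rj (f z) * (deriv f z) ^ 2

/-- The upper half-plane, as a subset of `ℂ`. -/
def UHP : Set ℂ := {z : ℂ | 0 < z.im}

/-!
Writing `P(f) = f''/f'`, the chain rule gives `P(j ∘ ψ) = (P(j) ∘ ψ)·ψ' + P(ψ)`, and differentiating
once more yields the cocycle rule `S(j ∘ ψ) = (S(j) ∘ ψ)·ψ'² + S(ψ)`. Since `(j ∘ ψ)' = (j' ∘ ψ)·ψ'`,
the term `R(j ∘ ψ)·(j ∘ ψ)'²` equals `(R(j)·j'² ∘ ψ)·ψ'²`, so `χ` obeys the same rule: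
`χ(j ∘ ψ) = (χ(j) ∘ ψ)·ψ'² + S(ψ)`. When both `χ(j)` and `χ(j ∘ ψ)` vanish, so does `S(ψ)`.
-/

open Filter Topology

noncomputable def preSchwarzian (f : ℂ → ℂ) (z : ℂ) : ℂ :=
  deriv (deriv f) z / deriv f z

lemma schwarzian_eq_deriv_preSchwarzian (f : ℂ → ℂ) (z : ℂ) :
    schwarzian f z = deriv (preSchwarzian f) z - preSchwarzian f z ^ 2 / 2 :=
  rfl

lemma isOpen_UHP : IsOpen UHP :=
  isOpen_lt continuous_const continuous_im

section Composition

variable {j ψ : ℂ → ℂ} {z : ℂ}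

lemma eventually_analyticAt_comp (hj : AnalyticAt ℂ j (ψ z)) (hψ : AnalyticAt ℂ ψ z) :
    ∀ᶠ y in 𝓝 z, AnalyticAt ℂ j (ψ y) ∧ AnalyticAt ℂ ψ y :=
  (hψ.continuousAt.eventually hj.eventually_analyticAt).and hψ.eventually_analyticAt

lemma deriv_comp_eventuallyEq (hj : AnalyticAt ℂ j (ψ z)) (hψ : AnalyticAt ℂ ψ z) :
    deriv (j ∘ ψ) =ᶠ[𝓝 z] fun y => deriv j (ψ y) * deriv ψ y := by
  filter_upwards [eventually_analyticAt_comp hj hψ] with y ⟨hjy, hψy⟩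
  exact deriv_comp y hjy.differentiableAt hψy.differentiableAt

lemma deriv_deriv_comp_eventuallyEq (hj : AnalyticAt ℂ j (ψ z)) (hψ : AnalyticAt ℂ ψ z) :
    deriv (deriv (j ∘ ψ)) =ᶠ[𝓝 z] fun y =>
      deriv (deriv j) (ψ y) * deriv ψ y ^ 2 + deriv j (ψ y) * deriv (deriv ψ) y := by
  filter_upwards [eventually_analyticAt_comp hj hψ] with y ⟨hjy, hψy⟩
  have hj'y : DifferentiableAt ℂ (fun x => deriv j (ψ x)) y :=
    hjy.deriv.differentiableAt.comp y hψy.differentiableAt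
  have hj''y : deriv (fun x => deriv j (ψ x)) y = deriv (deriv j) (ψ y) * deriv ψ y :=
    deriv_comp y hjy.deriv.differentiableAt hψy.differentiableAt
  rw [(deriv_comp_eventuallyEq hjy hψy).deriv_eq, deriv_fun_mul hj'y hψy.deriv.differentiableAt,
    hj''y]
  ring

lemma preSchwarzian_comp_eventuallyEq (hj : AnalyticAt ℂ j (ψ z)) (hψ : AnalyticAt ℂ ψ z)
    (hj' : deriv j (ψ z) ≠ 0) :
    preSchwarzian (j ∘ ψ) =ᶠ[𝓝 z] fun y =>
      preSchwarzian j (ψ y) * deriv ψ y + preSchwarzian ψ y := by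
  have hj'_ne : ∀ᶠ y in 𝓝 z, deriv j (ψ y) ≠ 0 :=
    (hj.deriv.continuousAt.comp hψ.continuousAt).eventually_ne hj'
  filter_upwards [deriv_comp_eventuallyEq hj hψ, deriv_deriv_comp_eventuallyEq hj hψ, hj'_ne]
    with y h1 h2 hj'y
  by_cases hψy : deriv ψ y = 0
  · -- both sides vanish, by the convention `x / 0 = 0`
    simp [preSchwarzian, h1, h2, hψy]
  · simp only [preSchwarzian, h1, h2]
    field_simp

theorem schwarzian_comp (hj : AnalyticAt ℂ j (ψ z)) (hψ : AnalyticAt ℂ ψ z)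
    (hj' : deriv j (ψ z) ≠ 0) (hψ' : deriv ψ z ≠ 0) :
    schwarzian (j ∘ ψ) z = schwarzian j (ψ z) * deriv ψ z ^ 2 + schwarzian ψ z := by
  have hPj : DifferentiableAt ℂ (preSchwarzian j) (ψ z) :=
    hj.deriv.deriv.differentiableAt.div hj.deriv.differentiableAt hj'
  have hPψ : DifferentiableAt ℂ (preSchwarzian ψ) z :=
    hψ.deriv.deriv.differentiableAt.div hψ.deriv.differentiableAt hψ'
  have hPjψ : DifferentiableAt ℂ (fun y => preSchwarzian j (ψ y)) z :=
    hPj.comp z hψ.differentiableAt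
  have hPjψ' :
      deriv (fun y => preSchwarzian j (ψ y)) z = deriv (preSchwarzian j) (ψ z) * deriv ψ z :=
    deriv_comp z hPj hψ.differentiableAt
  have hP := preSchwarzian_comp_eventuallyEq hj hψ hj'
  have hψ'' : deriv (deriv ψ) z = preSchwarzian ψ z * deriv ψ z := by
    rw [preSchwarzian, div_mul_cancel₀ _ hψ']
  simp only [schwarzian_eq_deriv_preSchwarzian, hP.deriv_eq, hP.eq_of_nhds]
  rw [deriv_fun_add (hPjψ.fun_mul hψ.deriv.differentiableAt) hPψ,
    deriv_fun_mul hPjψ hψ.deriv.differentiableAt, hPjψ', hψ'']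
  ring

theorem chi_comp (hj : AnalyticAt ℂ j (ψ z)) (hψ : AnalyticAt ℂ ψ z)
    (hj' : deriv j (ψ z) ≠ 0) (hψ' : deriv ψ z ≠ 0) :
    chi (j ∘ ψ) z = chi j (ψ z) * deriv ψ z ^ 2 + schwarzian ψ z := by
  rw [chi, chi, schwarzian_comp hj hψ hj' hψ', (deriv_comp_eventuallyEq hj hψ).eq_of_nhds,
    Function.comp_apply]
  ring

end Composition

theorem schwarzian_vanishes_of_chi_eq_zero_general (U : Set ℂ) (hU : IsOpen U)
    (j ψ : ℂ → ℂ) (hj : DifferentiableOn ℂ j UHP) (hψ : DifferentiableOn ℂ ψ U)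
    (hmaps : Set.MapsTo ψ U UHP)
    (hψ' : ∀ z ∈ U, deriv ψ z ≠ 0) (hj' : ∀ z ∈ U, deriv j (ψ z) ≠ 0)
    (hchij : ∀ w ∈ UHP, chi j w = 0) (hchijψ : ∀ z ∈ U, chi (j ∘ ψ) z = 0) :
    ∀ z ∈ U, schwarzian ψ z = 0 := by
  intro z hz
  have hjA : AnalyticAt ℂ j (ψ z) := hj.analyticAt (isOpen_UHP.mem_nhds (hmaps hz))
  have hψA : AnalyticAt ℂ ψ z := hψ.analyticAt (hU.mem_nhds hz)
  have h := chi_comp hjA hψA (hj' z hz) (hψ' z hz)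
  rw [hchijψ z hz, hchij (ψ z) (hmaps hz), zero_mul, zero_add] at h
  exact h.symm

/-- If `j` is holomorphic on `ℍ` with `χ(j) ≡ 0` and `ψ : U → ℍ` is holomorphic with
nonvanishing derivative such that `χ(j ∘ ψ) ≡ 0` on `U`, then `S(ψ) ≡ 0` on `U`. -/
theorem schwarzian_vanishes_of_chi_eq_zero (U : Set ℂ) (hU : IsOpen U)
    (j ψ : ℂ → ℂ) (hj : DifferentiableOn ℂ j UHP) (hψ : DifferentiableOn ℂ ψ U)
    (hmaps : Set.MapsTo ψ U UHP)
    (hψ' : ∀ z ∈ U, deriv ψ z ≠ 0) (hj' : ∀ z ∈ U, deriv j (ψ z) ≠ 0)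
    (hval : ∀ z ∈ U, j (ψ z) ≠ 0 ∧ j (ψ z) ≠ 1728)
    (hchij : ∀ w ∈ UHP, chi j w = 0) (hchijψ : ∀ z ∈ U, chi (j ∘ ψ) z = 0) :
    ∀ z ∈ U, schwarzian ψ z = 0 :=
  schwarzian_vanishes_of_chi_eq_zero_general U hU j ψ hj hψ hmaps hψ' hj' hchij hchijψ
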